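/- arXiv:2602.02853 — 3 statements merged into one kernel-verified Lean document; each statement's English description precedes it below -/
import Mathlib

section
/- Let Q be a metric space with its Borel σ-algebra, (p_t)_{t≥1} and p Borel probability measures on Q, and let (X_t)_{t≥1} be an independent sequence of Q-valued random variables on a probability space with X_t distributed according to p_t. Let M, L > 0, let (l_t)_{t≥1} be measurable functions l_t : Q → ℝ with |l_t(q)| ≤ M for all t and q, and let l* : Q → ℝ be bounded by M and L-Lipschitz, such that sup_{q∈Q} |l_t(q) − l*(q)| → 0 as t → ∞. Assume that for every bounded Lipschitz function f : Q → ℝ one has ∫ f dp_t → ∫ f dp. Fix a, b > 0 and h₀ ∈ ℝ, and define h_t = (1 − a/(b+at))·h_{t−1} + (a/(b+at))·l_t(X_t) for t ≥ 1. Then h_t converges almost surely to ∫ l* dp. -/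
/-!
Unrolling the recursion gives `h t = (b h₀ + a ∑_{1 ≤ s ≤ t} l_s(X_s)) / (b + a t)`, so it suffices
that the Cesàro means of `l_s(X_s)` converge to `∫ l⋆ dp`. Their expectations `∫ l_s dp_s` converge
there, by uniform convergence of `l_s` and weak convergence of `p_s`, so what remains is a strong
law of large numbers for bounded pairwise independent variables `Y i`. The centred partial sums
`D n` satisfy `E[D n ^ 2] = Var (∑_{i<n} Y i) ≤ n C²`, so along the squares the second moments of
`D (k²) / k²` are summable and these averages converge almost surely; boundedness controls the
gaps between consecutive squares.
-/

open MeasureTheory Filter Finset ProbabilityTheory Topology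

theorem abs_sum_Ico_le {x : ℕ → ℝ} {C : ℝ} (hx : ∀ i, |x i| ≤ C) (m n : ℕ) :
    |∑ i ∈ Ico m n, x i| ≤ (n - m : ℕ) * C :=
  calc |∑ i ∈ Ico m n, x i| ≤ ∑ i ∈ Ico m n, |x i| := abs_sum_le_sum_abs _ _
    _ ≤ (Ico m n).card • C := sum_le_card_nsmul _ _ _ fun i _ => hx i
    _ = (n - m : ℕ) * C := by rw [Nat.card_Ico, nsmul_eq_mul]

theorem abs_avg_le_abs_avg_sqrt_sq {x : ℕ → ℝ} {C : ℝ} (hx : ∀ i, |x i| ≤ C) {n : ℕ}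
    (hn : 1 ≤ n) :
    |(∑ i ∈ range n, x i) / n| ≤
      |(∑ i ∈ range (n.sqrt ^ 2), x i) / (n.sqrt ^ 2 : ℕ)| + 2 * C / n.sqrt := by
  set k := n.sqrt
  have hC : 0 ≤ C := (abs_nonneg _).trans (hx 0)
  have hk : (0 : ℝ) < k := by exact_mod_cast Nat.sqrt_pos.2 hn
  have hkn : k ^ 2 ≤ n := Nat.sqrt_le' n
  have hgap : ((n - k ^ 2 : ℕ) : ℝ) ≤ 2 * k := by
    have : n ≤ k * k + k + k := Nat.sqrt_le_add n
    exact_mod_cast (by rw [sq]; omega : n - k ^ 2 ≤ 2 * k)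
  have hsum : |∑ i ∈ range n, x i| ≤ |∑ i ∈ range (k ^ 2), x i| + 2 * k * C := by
    rw [← sum_range_add_sum_Ico _ hkn]
    calc _ ≤ |∑ i ∈ range (k ^ 2), x i| + |∑ i ∈ Ico (k ^ 2) n, x i| := abs_add_le _ _
      _ ≤ _ := by gcongr; exact (abs_sum_Ico_le hx _ _).trans (by gcongr)
  have hk2n : ((k ^ 2 : ℕ) : ℝ) ≤ n := by exact_mod_cast hkn
  calc |(∑ i ∈ range n, x i) / n| = |∑ i ∈ range n, x i| / n := by rw [abs_div, Nat.abs_cast]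
    _ ≤ (|∑ i ∈ range (k ^ 2), x i| + 2 * k * C) / (k ^ 2 : ℕ) := by
        gcongr
    _ = _ := by rw [abs_div, Nat.abs_cast]; push_cast; field_simp

theorem tendsto_avg_of_tendsto_avg_sq {x : ℕ → ℝ} {C : ℝ} (hx : ∀ i, |x i| ≤ C)
    (hsq : Tendsto (fun k => (∑ i ∈ range (k ^ 2), x i) / (k ^ 2 : ℕ)) atTop (𝓝 0)) :
    Tendsto (fun n => (∑ i ∈ range n, x i) / n) atTop (𝓝 0) := by
  have hsqrt : Tendsto Nat.sqrt atTop atTop :=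
    tendsto_atTop_atTop.2 fun k => ⟨k ^ 2, fun n hn => Nat.le_sqrt'.2 hn⟩
  have hbound : Tendsto (fun k : ℕ => |(∑ i ∈ range (k ^ 2), x i) / (k ^ 2 : ℕ)| + 2 * C / k)
      atTop (𝓝 0) := by
    simpa using hsq.abs.add (tendsto_const_div_atTop_nhds_zero_nat (2 * C))
  rw [tendsto_zero_iff_abs_tendsto_zero]
  refine squeeze_zero' (.of_forall fun n => abs_nonneg _) ?_ (hbound.comp hsqrt)
  filter_upwards [eventually_ge_atTop 1] with n hn
  exact abs_avg_le_abs_avg_sqrt_sq hx hn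

theorem ae_tendsto_zero_of_summable_integral_sq {α : Type*} [MeasurableSpace α] {μ : Measure α}
    {g : ℕ → α → ℝ} (hg : ∀ n, MemLp (g n) 2 μ)
    (hsum : Summable fun n => ∫ x, g n x ^ 2 ∂μ) :
    ∀ᵐ x ∂μ, Tendsto (fun n => g n x) atTop (𝓝 0) := by
  have hmeas : ∀ n, AEMeasurable (fun x => ENNReal.ofReal (g n x ^ 2)) μ :=
    fun n => ((hg n).aestronglyMeasurable.aemeasurable.pow_const 2).ennreal_ofReal
  have hfin : ∫⁻ x, ∑' n, ENNReal.ofReal (g n x ^ 2) ∂μ ≠ ⊤ := by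
    rw [lintegral_tsum hmeas]
    simp_rw [← ofReal_integral_eq_lintegral_ofReal (hg _).integrable_sq
      (.of_forall fun x => sq_nonneg _)]
    rw [← ENNReal.ofReal_tsum_of_nonneg (fun n => integral_nonneg fun x => sq_nonneg _) hsum]
    exact ENNReal.ofReal_ne_top
  filter_upwards [ae_lt_top' (AEMeasurable.tsum hmeas) hfin] with x hx
  have hsq : Summable fun n => g n x ^ 2 :=
    (ENNReal.summable_toReal hx.ne).congr fun n => ENNReal.toReal_ofReal (sq_nonneg _)
  have habs := hsq.tendsto_atTop_zero.sqrt
  simp only [Real.sqrt_sq_eq_abs, Real.sqrt_zero] at habs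
  exact (tendsto_zero_iff_abs_tendsto_zero _).2 habs

section StrongLaw

universe u

variable {Ω : Type u} [MeasurableSpace Ω] {P : Measure Ω} [IsProbabilityMeasure P]
  {Y : ℕ → Ω → ℝ} {C : ℝ}

theorem integral_sq_sum_sub_integral_le (hY : ∀ i, AEMeasurable (Y i) P)
    (hbdd : ∀ i ω, |Y i ω| ≤ C) (hindep : Pairwise fun i j => IndepFun (Y i) (Y j) P) (n : ℕ) :
    ∫ ω, (∑ i ∈ range n, (Y i ω - ∫ ω', Y i ω' ∂P)) ^ 2 ∂P ≤ n * C ^ 2 := by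
  have hIcc : ∀ i, ∀ᵐ ω ∂P, Y i ω ∈ Set.Icc (-C) C :=
    fun i => .of_forall fun ω => abs_le.1 (hbdd i ω)
  have hLp : ∀ i, MemLp (Y i) 2 P :=
    fun i => memLp_of_bounded (hIcc i) (hY i).aestronglyMeasurable 2
  calc ∫ ω, (∑ i ∈ range n, (Y i ω - ∫ ω', Y i ω' ∂P)) ^ 2 ∂P
      = Var[∑ i ∈ range n, Y i; P] := by
        rw [variance_eq_integral (Finset.aemeasurable_sum _ fun i _ => hY i)]
        simp only [Finset.sum_apply]
        rw [integral_finsetSum _ fun i _ => (hLp i).integrable one_le_two]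
        simp only [sum_sub_distrib]
    _ = ∑ i ∈ range n, Var[Y i; P] :=
        IndepFun.variance_sum (fun i _ => hLp i) fun i _ j _ hij => hindep hij
    _ ≤ ∑ i ∈ range n, C ^ 2 :=
        sum_le_sum fun i _ => (variance_le_sq_of_bounded (hIcc i) (hY i)).trans_eq (by ring)
    _ = n * C ^ 2 := by simp

theorem ae_tendsto_avg_sub_integral (hY : ∀ i, AEMeasurable (Y i) P)
    (hbdd : ∀ i ω, |Y i ω| ≤ C) (hindep : Pairwise fun i j => IndepFun (Y i) (Y j) P) :
    ∀ᵐ ω ∂P, Tendsto (fun n => (∑ i ∈ range n, (Y i ω - ∫ ω', Y i ω' ∂P)) / n) atTop (𝓝 0) := by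
  set D : ℕ → Ω → ℝ := fun n ω => ∑ i ∈ range n, (Y i ω - ∫ ω', Y i ω' ∂P)
  have hLp : ∀ n, MemLp (D n) 2 P := fun n =>
    memLp_finsetSum _ fun i _ => (memLp_of_bounded (.of_forall fun ω => abs_le.1 (hbdd i ω))
      (hY i).aestronglyMeasurable 2).sub (memLp_const _)
  have hmoment : ∀ k : ℕ, ∫ ω, (D (k ^ 2) ω / (k ^ 2 : ℕ)) ^ 2 ∂P ≤ C ^ 2 / k ^ 2 := by
    intro k
    simp only [div_pow]
    rw [integral_div]
    calc (∫ ω, D (k ^ 2) ω ^ 2 ∂P) / ((k ^ 2 : ℕ) : ℝ) ^ 2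
        ≤ (k ^ 2 : ℕ) * C ^ 2 / ((k ^ 2 : ℕ) : ℝ) ^ 2 := by
          gcongr; exact integral_sq_sum_sub_integral_le hY hbdd hindep _
      _ = C ^ 2 / k ^ 2 := by
          rcases eq_or_ne (k : ℝ) 0 with hk | hk
          · simp [hk]
          · push_cast; field_simp
  have hsummable : Summable fun k : ℕ => C ^ 2 / (k : ℝ) ^ 2 :=
    ((Real.summable_one_div_nat_pow.2 one_lt_two).mul_left (C ^ 2)).congr fun k => by ring
  have hsq : ∀ᵐ ω ∂P, Tendsto (fun k => D (k ^ 2) ω / (k ^ 2 : ℕ)) atTop (𝓝 0) :=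
    ae_tendsto_zero_of_summable_integral_sq
      (fun k => by simpa only [div_eq_mul_inv] using (hLp _).mul_const _)
      (hsummable.of_nonneg_of_le (fun k => integral_nonneg fun ω => sq_nonneg _) hmoment)
  filter_upwards [hsq] with ω hω
  refine tendsto_avg_of_tendsto_avg_sq (C := 2 * C) (fun i => ?_) hω
  have hmean : |∫ ω', Y i ω' ∂P| ≤ C := by
    simpa using norm_integral_le_of_norm_le_const (μ := P)
      (.of_forall fun ω => (Real.norm_eq_abs _).trans_le (hbdd i ω))
  linarith [abs_sub (Y i ω) (∫ ω', Y i ω' ∂P), hbdd i ω]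

theorem ae_tendsto_avg_of_tendsto_integral (hY : ∀ i, AEMeasurable (Y i) P)
    (hbdd : ∀ i ω, |Y i ω| ≤ C) (hindep : Pairwise fun i j => IndepFun (Y i) (Y j) P) {c : ℝ}
    (hmean : Tendsto (fun i => ∫ ω, Y i ω ∂P) atTop (𝓝 c)) :
    ∀ᵐ ω ∂P, Tendsto (fun n => (∑ i ∈ range n, Y i ω) / n) atTop (𝓝 c) := by
  filter_upwards [ae_tendsto_avg_sub_integral hY hbdd hindep] with ω hω
  refine (zero_add c ▸ hω.add hmean.cesaro).congr fun n => ?_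
  rw [sum_sub_distrib]
  ring

end StrongLaw

theorem tendsto_integral_of_tendstoUniformly {α : Type*} [MeasurableSpace α]
    {p : ℕ → Measure α} [∀ t, IsProbabilityMeasure (p t)] {f : ℕ → α → ℝ} {g : α → ℝ}
    (hf : ∀ t, Integrable (f t) (p t)) (hg : ∀ t, Integrable g (p t))
    (hfg : TendstoUniformly f g atTop) {c : ℝ}
    (hgc : Tendsto (fun t => ∫ x, g x ∂p t) atTop (𝓝 c)) :
    Tendsto (fun t => ∫ x, f t x ∂p t) atTop (𝓝 c) := by
  have hdiff : Tendsto (fun t => ∫ x, f t x ∂p t - ∫ x, g x ∂p t) atTop (𝓝 0) := by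
    rw [Metric.tendsto_nhds]
    intro ε hε
    filter_upwards [Metric.tendstoUniformly_iff.1 hfg (ε / 2) (half_pos hε)] with t ht
    rw [dist_zero_right, ← integral_sub (hf t) (hg t)]
    refine (norm_integral_le_of_norm_le_const (C := ε / 2) (.of_forall fun x => ?_)).trans_lt ?_
    · rw [← dist_eq_norm, dist_comm]; exact (ht x).le
    · simpa using half_lt_self hε
  simpa using hdiff.add hgc

theorem recurrence_closed_form {a b h₀ : ℝ} {x h : ℕ → ℝ} (hden : ∀ t : ℕ, b + a * t ≠ 0)
    (h0 : h 0 = h₀)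
    (hrec : ∀ t : ℕ, 1 ≤ t → h t = (1 - a / (b + a * t)) * h (t - 1) + (a / (b + a * t)) * x t)
    (t : ℕ) : h t = (b * h₀ + a * ∑ s ∈ range t, x (s + 1)) / (b + a * t) := by
  induction t with
  | zero => simpa [h0] using (mul_div_cancel_left₀ h₀ (by simpa using hden 0)).symm
  | succ t ih =>
    have h1 := hden t
    have h2 := hden (t + 1)
    push_cast at h2
    rw [hrec (t + 1) (by omega), Nat.add_sub_cancel, ih, sum_range_succ]
    push_cast
    field_simp
    ring

theorem tendsto_add_mul_div_add_mul {a b d c : ℝ} (ha : a ≠ 0) {S : ℕ → ℝ}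
    (hS : Tendsto (fun t => S t / t) atTop (𝓝 c)) :
    Tendsto (fun t => (d + a * S t) / (b + a * t)) atTop (𝓝 c) := by
  have hlim : Tendsto (fun t : ℕ => (d / t + a * (S t / t)) / (b / t + a)) atTop
      (𝓝 ((0 + a * c) / (0 + a))) :=
    ((tendsto_const_div_atTop_nhds_zero_nat d).add (hS.const_mul a)).div
      ((tendsto_const_div_atTop_nhds_zero_nat b).add tendsto_const_nhds) (by simpa using ha)
  rw [zero_add, zero_add, mul_div_cancel_left₀ c ha] at hlim
  refine hlim.congr' ?_
  filter_upwards [eventually_ge_atTop 1] with t ht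
  have : (t : ℝ) ≠ 0 := by positivity
  field_simp

theorem recm_state_converges_as_general
    {Q : Type*} [MetricSpace Q] [MeasurableSpace Q] [BorelSpace Q]
    {Ω : Type*} [MeasurableSpace Ω] (P : Measure Ω) [IsProbabilityMeasure P]
    (p : ℕ → Measure Q) (plim : Measure Q)
    (hprob : ∀ t, IsProbabilityMeasure (p t)) [IsProbabilityMeasure plim]
    (X : ℕ → Ω → Q) (hXmeas : ∀ t, Measurable (X t))
    (hXindep : ProbabilityTheory.iIndepFun X P)
    (hXlaw : ∀ t, Measure.map (X t) P = p t)
    (M L : ℝ)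
    (l : ℕ → Q → ℝ) (hlmeas : ∀ t, Measurable (l t))
    (hlbdd : ∀ t, ∀ q : Q, |l t q| ≤ M)
    (lstar : Q → ℝ) (hlstarbdd : ∀ q : Q, |lstar q| ≤ M)
    (hlstarlip : LipschitzWith (Real.toNNReal L) lstar)
    (hunif : ∀ ε : ℝ, 0 < ε → ∃ N : ℕ, ∀ t ≥ N, ∀ q : Q, |l t q - lstar q| < ε)
    (hweak : ∀ f : Q → ℝ, (∃ Cf : ℝ, ∀ q : Q, |f q| ≤ Cf) → (∃ Kf : NNReal, LipschitzWith Kf f) →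
      Tendsto (fun t => ∫ q, f q ∂(p t)) atTop (nhds (∫ q, f q ∂plim)))
    (a b : ℝ) (ha : 0 < a) (hb : 0 < b) (h₀ : ℝ)
    (h : ℕ → Ω → ℝ) (hinit : ∀ ω, h 0 ω = h₀)
    (hrec : ∀ t : ℕ, 1 ≤ t → ∀ ω : Ω,
      h t ω = (1 - a / (b + a * t)) * h (t - 1) ω + (a / (b + a * t)) * l t (X t ω)) :
    ∀ᵐ ω ∂P, Tendsto (fun t => h t ω) atTop (nhds (∫ q, lstar q ∂plim)) := by
  have hbound {f : Q → ℝ} (hf : Measurable f) (hfM : ∀ q, |f q| ≤ M) (t : ℕ) :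
      Integrable f (p t) :=
    have := hprob t
    .of_bound hf.aestronglyMeasurable M (.of_forall hfM)
  have hlunif : TendstoUniformly l lstar atTop := Metric.tendstoUniformly_iff.2 fun ε hε => by
    obtain ⟨N, hN⟩ := hunif ε hε
    filter_upwards [eventually_ge_atTop N] with t ht q
    rw [dist_comm, Real.dist_eq]
    exact hN t ht q
  have hlaw : Tendsto (fun t => ∫ q, l t q ∂p t) atTop (𝓝 (∫ q, lstar q ∂plim)) :=
    tendsto_integral_of_tendstoUniformly (fun t => hbound (hlmeas t) (hlbdd t) t)
      (hbound hlstarlip.continuous.measurable hlstarbdd) hlunif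
      (hweak lstar ⟨M, hlstarbdd⟩ ⟨_, hlstarlip⟩)
  have hmean (t : ℕ) : ∫ ω, l t (X t ω) ∂P = ∫ q, l t q ∂p t := by
    rw [← hXlaw t, integral_map (hXmeas t).aemeasurable (hlmeas t).aestronglyMeasurable]
  have hindep : iIndepFun (fun t ω => l t (X t ω)) P := hXindep.comp l hlmeas
  have havg := ae_tendsto_avg_of_tendsto_integral (Y := fun s ω => l (s + 1) (X (s + 1) ω))
    (fun s => ((hlmeas _).comp (hXmeas _)).aemeasurable) (fun s ω => hlbdd _ _)
    (fun i j hij => hindep.indepFun (by simpa using hij))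
    (by simp only [hmean]; exact hlaw.comp (tendsto_add_atTop_nat 1))
  filter_upwards [havg] with ω hω
  have hclosed := recurrence_closed_form (h := (h · ω))
    (fun t => (by positivity : 0 < b + a * t).ne') (hinit ω) fun t ht => hrec t ht ω
  simpa only [hclosed] using tendsto_add_mul_div_add_mul ha.ne' hω

/-- Convergence of the RECM optimization state (Lemma 4.1): if `X t` are independent samples with
laws `p t` converging weakly (tested against bounded Lipschitz functions) to `p`, the update
functions `l t` are measurable, uniformly bounded by `M` and converge uniformly to a bounded
`L`-Lipschitz `l⋆`, then the recursively defined state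
`h t = (1 − a/(b+at))·h (t−1) + (a/(b+at))·l t (X t)` converges almost surely to `∫ l⋆ dp`. -/
theorem recm_state_converges_as
    {Q : Type*} [MetricSpace Q] [MeasurableSpace Q] [BorelSpace Q]
    {Ω : Type*} [MeasurableSpace Ω] (P : Measure Ω) [IsProbabilityMeasure P]
    (p : ℕ → Measure Q) (plim : Measure Q)
    (hprob : ∀ t, IsProbabilityMeasure (p t)) [IsProbabilityMeasure plim]
    (X : ℕ → Ω → Q) (hXmeas : ∀ t, Measurable (X t))
    (hXindep : ProbabilityTheory.iIndepFun X P)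
    (hXlaw : ∀ t, Measure.map (X t) P = p t)
    (M L : ℝ) (hM : 0 < M) (hL : 0 < L)
    (l : ℕ → Q → ℝ) (hlmeas : ∀ t, Measurable (l t))
    (hlbdd : ∀ t, ∀ q : Q, |l t q| ≤ M)
    (lstar : Q → ℝ) (hlstarbdd : ∀ q : Q, |lstar q| ≤ M)
    (hlstarlip : LipschitzWith (Real.toNNReal L) lstar)
    (hunif : ∀ ε : ℝ, 0 < ε → ∃ N : ℕ, ∀ t ≥ N, ∀ q : Q, |l t q - lstar q| < ε)
    (hweak : ∀ f : Q → ℝ, (∃ Cf : ℝ, ∀ q : Q, |f q| ≤ Cf) → (∃ Kf : NNReal, LipschitzWith Kf f) →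
      Tendsto (fun t => ∫ q, f q ∂(p t)) atTop (nhds (∫ q, f q ∂plim)))
    (a b : ℝ) (ha : 0 < a) (hb : 0 < b) (h₀ : ℝ)
    (h : ℕ → Ω → ℝ) (hinit : ∀ ω, h 0 ω = h₀)
    (hrec : ∀ t : ℕ, 1 ≤ t → ∀ ω : Ω,
      h t ω = (1 - a / (b + a * t)) * h (t - 1) ω + (a / (b + a * t)) * l t (X t ω)) :
    ∀ᵐ ω ∂P, Tendsto (fun t => h t ω) atTop (nhds (∫ q, lstar q ∂plim)) :=
  recm_state_converges_as_general P p plim hprob X hXmeas hXindep hXlaw M L l hlmeas hlbdd lstar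
    hlstarbdd hlstarlip hunif hweak a b ha hb h₀ h hinit hrec
end

section
/- Let Q be a metric space and G a group acting on Q via Borel-measurable maps T_g : Q → Q. Let p be a Borel probability measure on Q, C_G ⊆ G finite and nonempty, and p_{C_G} := (1/|C_G|)·Σ_{g∈C_G} (T_g)_* p. Let C > 0 and let {r_θ}_{θ∈Θ} be a family of bounded measurable functions Q → ℝ with the universal-approximation property: for every bounded continuous 1-Lipschitz f : Q → ℝ and every δ > 0 there exists θ ∈ Θ with sup_{q∈Q} |f(q) − C⁻¹·r_θ(q)| < δ. For each θ define l_θ(q) = r_θ(q) − (1/|C_G|)·Σ_{g∈C_G} r_θ(T_g q). Then for every bounded continuous 1-Lipschitz f : Q → ℝ and every ε > 0 there exists θ* ∈ Θ such that ∫ l_{θ*} dp ≥ C·( ∫ f dp − ∫ f dp_{C_G} ) − ε. -/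
/-!
Choose `θ` with `|f - C⁻¹ r_θ| < ε / (2C)` everywhere, so that `|r_θ - C f| ≤ ε / 2`. Then
`∫ l_θ dp = ∫ r_θ dp - ∫ r_θ dp_{C_G}`, and since `p` and `p_{C_G}` both have total mass at most
one, each of these integrals is within `ε / 2` of `C` times the corresponding integral of `f`.
-/

open MeasureTheory
open scoped ENNReal

lemma abs_integral_sub_integral_le {Q : Type*} [MeasurableSpace Q] {μ : Measure Q}
    [IsFiniteMeasure μ] (hμ : μ Set.univ ≤ 1) {u v : Q → ℝ} (hu : Integrable u μ)
    (hv : Integrable v μ) {c : ℝ} (hc : 0 ≤ c) (huv : ∀ q, |u q - v q| ≤ c) :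
    |∫ q, u q ∂μ - ∫ q, v q ∂μ| ≤ c := by
  have hμ_real : μ.real Set.univ ≤ 1 := ENNReal.toReal_le_of_le_ofReal zero_le_one (by simpa)
  rw [← integral_sub hu hv]
  calc |∫ q, u q - v q ∂μ| ≤ c * μ.real Set.univ :=
        norm_integral_le_of_norm_le_const (f := fun q => u q - v q) (ae_of_all _ huv)
    _ ≤ c := mul_le_of_le_one_right hc hμ_real

section Symmetrization

variable {Q G : Type*} [MeasurableSpace Q]

noncomputable def symmetrization (T : G → Q → Q) (CG : Finset G) (p : Measure Q) : Measure Q :=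
  (CG.card : ℝ≥0∞)⁻¹ • ∑ g ∈ CG, p.map (T g)

variable {T : G → Q → Q} {p : Measure Q}

lemma symmetrization_univ_le_one (hT : ∀ g, Measurable (T g)) (CG : Finset G)
    [IsProbabilityMeasure p] : symmetrization T CG p Set.univ ≤ 1 := by
  simp only [symmetrization, Measure.smul_apply, Measure.coe_finsetSum, Finset.sum_apply,
    Measure.map_apply (hT _) MeasurableSet.univ, Set.preimage_univ, measure_univ,
    Finset.sum_const, nsmul_eq_mul, mul_one, smul_eq_mul]
  -- for `CG = ∅` this is `⊤ * 0 = 0`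
  exact ENNReal.inv_mul_le_one _

lemma isFiniteMeasure_symmetrization (hT : ∀ g, Measurable (T g)) (CG : Finset G)
    [IsProbabilityMeasure p] : IsFiniteMeasure (symmetrization T CG p) :=
  ⟨(symmetrization_univ_le_one hT CG).trans_lt ENNReal.one_lt_top⟩

lemma integral_symmetrization (hT : ∀ g, Measurable (T g)) (CG : Finset G)
    [IsFiniteMeasure p] {φ : Q → ℝ} (hφ : Measurable φ) {M : ℝ} (hM : ∀ q, |φ q| ≤ M) :
    ∫ q, φ q ∂symmetrization T CG p = (1 / (CG.card : ℝ)) * ∑ g ∈ CG, ∫ q, φ (T g q) ∂p := by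
  have hint : ∀ g ∈ CG, Integrable φ (p.map (T g)) := fun g _ =>
    Integrable.of_bound hφ.aestronglyMeasurable M (ae_of_all _ hM)
  rw [symmetrization, integral_smul_measure, integral_finsetSum_measure hint, ENNReal.toReal_inv,
    ENNReal.toReal_natCast, one_div, smul_eq_mul]
  congr 1
  exact Finset.sum_congr rfl fun g _ =>
    integral_map (hT g).aemeasurable hφ.aestronglyMeasurable

lemma integral_sub_average_comp (hT : ∀ g, Measurable (T g)) (CG : Finset G)
    [IsFiniteMeasure p] {φ : Q → ℝ} (hφ : Measurable φ) {M : ℝ} (hM : ∀ q, |φ q| ≤ M) :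
    ∫ q, (φ q - (1 / (CG.card : ℝ)) * ∑ g ∈ CG, φ (T g q)) ∂p
      = ∫ q, φ q ∂p - ∫ q, φ q ∂symmetrization T CG p := by
  have hint : ∀ g ∈ CG, Integrable (fun q => φ (T g q)) p := fun g _ =>
    Integrable.of_bound (hφ.comp (hT g)).aestronglyMeasurable M (ae_of_all _ fun q => hM _)
  rw [integral_sub (Integrable.of_bound hφ.aestronglyMeasurable M (ae_of_all _ hM))
      ((integrable_finsetSum CG hint).const_mul _), integral_const_mul,
    integral_finsetSum CG hint, integral_symmetrization hT CG hφ hM]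

end Symmetrization

lemma abs_sub_mul_le_of_abs_sub_inv_mul_lt {C a b δ : ℝ} (hC : 0 < C) (h : |a - C⁻¹ * b| < δ) :
    |b - C * a| ≤ C * δ := by
  have : b - C * a = -(C * (a - C⁻¹ * b)) := by field_simp; ring
  rw [this, abs_neg, abs_mul, abs_of_pos hC]
  exact mul_le_mul_of_nonneg_left h.le hC.le

theorem update_integral_universal_approx_lower_bound_general
    {Q : Type*} [MetricSpace Q] [MeasurableSpace Q] [BorelSpace Q]
    {G : Type*}
    (T : G → Q → Q) (hTmeas : ∀ g : G, Measurable (T g))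
    (p : Measure Q) [IsProbabilityMeasure p]
    (CG : Finset G)
    (C : ℝ) (hC : 0 < C)
    {Θ : Type*} (r : Θ → Q → ℝ)
    (hrmeas : ∀ θ : Θ, Measurable (r θ))
    (hrbdd : ∀ θ : Θ, ∃ M : ℝ, ∀ q : Q, |r θ q| ≤ M)
    (huniv : ∀ f : Q → ℝ, (∃ M : ℝ, ∀ q : Q, |f q| ≤ M) → Continuous f → LipschitzWith 1 f →
      ∀ δ : ℝ, 0 < δ → ∃ θ : Θ, ∀ q : Q, |f q - C⁻¹ * r θ q| < δ) :
    ∀ f : Q → ℝ, (∃ M : ℝ, ∀ q : Q, |f q| ≤ M) → Continuous f → LipschitzWith 1 f →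
      ∀ ε : ℝ, 0 < ε → ∃ θstar : Θ,
        ∫ q, (r θstar q - (1 / (CG.card : ℝ)) * ∑ g ∈ CG, r θstar (T g q)) ∂p
          ≥ C * (∫ q, f q ∂p
              - ∫ q, f q ∂(((CG.card : ℝ≥0∞))⁻¹ • ∑ g ∈ CG, Measure.map (T g) p)) - ε := by
  intro f ⟨M, hM⟩ hfcont hflip ε hε
  obtain ⟨θ, hθ⟩ := huniv f ⟨M, hM⟩ hfcont hflip (ε / (2 * C)) (by positivity)
  obtain ⟨Mr, hMr⟩ := hrbdd θ
  have happrox : ∀ q, |r θ q - C * f q| ≤ ε / 2 := fun q => by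
    convert abs_sub_mul_le_of_abs_sub_inv_mul_lt hC (hθ q) using 1
    field_simp
  have : IsFiniteMeasure (symmetrization T CG p) := isFiniteMeasure_symmetrization hTmeas CG
  have hbound : ∀ μ : Measure Q, [IsFiniteMeasure μ] → μ Set.univ ≤ 1 →
      |∫ q, r θ q ∂μ - C * ∫ q, f q ∂μ| ≤ ε / 2 := fun μ _ hμ => by
    rw [← integral_const_mul]
    exact abs_integral_sub_integral_le hμ
      (Integrable.of_bound (hrmeas θ).aestronglyMeasurable Mr (ae_of_all _ hMr))
      ((Integrable.of_bound hfcont.measurable.aestronglyMeasurable M (ae_of_all _ hM)).const_mul C)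
      (by positivity) happrox
  have hp := abs_le.mp (hbound p prob_le_one)
  have hpCG := abs_le.mp (hbound (symmetrization T CG p) (symmetrization_univ_le_one hTmeas CG))
  refine ⟨θ, ?_⟩
  rw [integral_sub_average_comp hTmeas CG (hrmeas θ) hMr]
  change _ ≥ C * (_ - ∫ q, f q ∂symmetrization T CG p) - ε
  linarith [hp.1, hpCG.2]

/-- Second part of Theorem 4.2: if `{r θ}` is a family of bounded measurable functions such that
`C⁻¹·r θ` can uniformly approximate every bounded continuous 1-Lipschitz function, then for every
bounded continuous 1-Lipschitz `f` and every `ε > 0` there is `θ⋆` with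
`∫ l_{θ⋆} dp ≥ C·(∫ f dp − ∫ f dp_{C_G}) − ε`, where
`l_θ q = r θ q − (1/|C_G|)·∑_{g∈C_G} r θ (T g q)` and
`p_{C_G} = (1/|C_G|)·∑_{g∈C_G} (T g)_* p`. -/
theorem update_integral_universal_approx_lower_bound
    {Q : Type*} [MetricSpace Q] [MeasurableSpace Q] [BorelSpace Q]
    {G : Type*} [Group G]
    (T : G → Q → Q) (hTmeas : ∀ g : G, Measurable (T g))
    (hTmul : ∀ g h : G, ∀ q : Q, T g (T h q) = T (g * h) q)
    (hTone : ∀ q : Q, T 1 q = q)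
    (p : Measure Q) [IsProbabilityMeasure p]
    (CG : Finset G) (hCG : CG.Nonempty)
    (C : ℝ) (hC : 0 < C)
    {Θ : Type*} (r : Θ → Q → ℝ)
    (hrmeas : ∀ θ : Θ, Measurable (r θ))
    (hrbdd : ∀ θ : Θ, ∃ M : ℝ, ∀ q : Q, |r θ q| ≤ M)
    (huniv : ∀ f : Q → ℝ, (∃ M : ℝ, ∀ q : Q, |f q| ≤ M) → Continuous f → LipschitzWith 1 f →
      ∀ δ : ℝ, 0 < δ → ∃ θ : Θ, ∀ q : Q, |f q - C⁻¹ * r θ q| < δ) :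
    ∀ f : Q → ℝ, (∃ M : ℝ, ∀ q : Q, |f q| ≤ M) → Continuous f → LipschitzWith 1 f →
      ∀ ε : ℝ, 0 < ε → ∃ θstar : Θ,
        ∫ q, (r θstar q - (1 / (CG.card : ℝ)) * ∑ g ∈ CG, r θstar (T g q)) ∂p
          ≥ C * (∫ q, f q ∂p
              - ∫ q, f q ∂(((CG.card : ℝ≥0∞))⁻¹ • ∑ g ∈ CG, Measure.map (T g) p)) - ε :=
  update_integral_universal_approx_lower_bound_general T hTmeas p CG C hC r hrmeas hrbdd huniv
end

section
/- Let Q be a metric space and G a compact metrizable topological group acting continuously on Q, i.e. (g,q) ↦ T_g q is jointly continuous, with T_g ∘ T_h = T_{gh} and T_e = id. Let p be a Borel probability measure on Q and let C_G ⊆ G be a finite nonempty subset that topologically generates G, meaning the topological closure of the subgroup generated by C_G equals G. Then (1/|C_G|)·Σ_{g∈C_G} (T_g)_* p = p if and only if (T_g)_* p = p for every g ∈ G. -/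
open MeasureTheory
open scoped ENNReal BoundedContinuousFunction

/-!
For a bounded continuous `f` on `Q`, the function `φ h = ∫ f (T h q) ∂p` is continuous on `G`, and
invariance of `p` under the symmetrization says that `φ` equals its own average over right
translates by `C_G`. A maximum principle then makes `φ` constant: at a maximum point all the
averaged values are maximal, so the set where the maximum is attained is closed and stable under
right multiplication by the monoid generated by `C_G`, which is dense because in a compact group
its closure agrees with that of the generated subgroup. Hence `∫ f ∘ T g ∂p = φ g = φ 1 = ∫ f ∂p`
for every `f`, which determines the measure.
-/

theorem Finset.forall_eq_of_inv_card_mul_sum_eq_of_le {ι : Type*} {s : Finset ι} {f : ι → ℝ}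
    {M : ℝ} (hle : ∀ i ∈ s, f i ≤ M) (havg : (s.card : ℝ)⁻¹ * ∑ i ∈ s, f i = M) :
    ∀ i ∈ s, f i = M := by
  intro i hi
  have hcard : (s.card : ℝ) ≠ 0 := Nat.cast_ne_zero.2 (Finset.card_ne_zero_of_mem hi)
  have hsum : ∑ j ∈ s, f j = ∑ _j ∈ s, M := by
    rw [Finset.sum_const, nsmul_eq_mul, ← havg, mul_inv_cancel_left₀ hcard]
  exact (Finset.sum_eq_sum_iff_of_le hle).1 hsum i hi

section MaximumPrinciple

variable {G : Type*} [Group G] [TopologicalSpace G] [IsTopologicalGroup G] [CompactSpace G]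

theorem Continuous.eq_of_forall_eq_inv_card_mul_sum_mul {s : Finset G}
    (hs : Dense (Subgroup.closure (s : Set G) : Set G)) {φ : G → ℝ} (hφ : Continuous φ)
    (hmean : ∀ h, φ h = (s.card : ℝ)⁻¹ * ∑ g ∈ s, φ (h * g)) (x y : G) : φ x = φ y := by
  obtain ⟨h₀, -, hmax⟩ := isCompact_univ.exists_isMaxOn Set.univ_nonempty hφ.continuousOn
  have hle : ∀ h, φ h ≤ φ h₀ := fun h => hmax (Set.mem_univ h)
  have hstep : ∀ h, φ h = φ h₀ → ∀ g ∈ s, φ (h * g) = φ h₀ := fun h hh =>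
    Finset.forall_eq_of_inv_card_mul_sum_eq_of_le (fun g _ => hle _) ((hmean h).symm.trans hh)
  have hmonoid : ∀ z ∈ Submonoid.closure (s : Set G), φ (h₀ * z) = φ h₀ := by
    intro z hz
    induction hz using Submonoid.closure_induction_right with
    | one => rw [mul_one]
    | mul_right z _ g hg ih => rw [← mul_assoc]; exact hstep _ ih g hg
  have hall : (fun z => φ (h₀ * z)) = fun _ => φ h₀ :=
    Continuous.ext_on (dense_submonoidClosure_iff_subgroupClosure.2 hs)
      (hφ.comp (continuous_const_mul h₀)) continuous_const hmonoid
  have hconst : ∀ z, φ z = φ h₀ := fun z => by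
    simpa using congrFun hall (h₀⁻¹ * z)
  rw [hconst x, hconst y]

end MaximumPrinciple

section Symmetrization

variable {Q : Type*} [MeasurableSpace Q] [TopologicalSpace Q] [OpensMeasurableSpace Q]

theorem integral_inv_card_smul_sum_map {ι : Type*} {T : ι → Q → Q} (hT : ∀ i, Measurable (T i))
    (s : Finset ι) (p : Measure Q) [IsFiniteMeasure p] (f : Q →ᵇ ℝ) :
    ∫ q, f q ∂((s.card : ℝ≥0∞)⁻¹ • ∑ i ∈ s, p.map (T i))
      = (s.card : ℝ)⁻¹ * ∑ i ∈ s, ∫ q, f (T i q) ∂p := by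
  rw [integral_smul_measure, integral_finsetSum_measure (fun i _ => f.integrable _),
    ENNReal.toReal_inv, ENNReal.toReal_natCast, smul_eq_mul]
  congr 1
  refine Finset.sum_congr rfl fun i _ => ?_
  exact integral_map (hT i).aemeasurable f.continuous.aestronglyMeasurable

theorem continuous_integral_comp_of_continuous_uncurry {X : Type*} [TopologicalSpace X]
    [FirstCountableTopology X] {T : X → Q → Q} (hT : Continuous (fun x : X × Q => T x.1 x.2))
    (p : Measure Q) [IsFiniteMeasure p] (f : Q →ᵇ ℝ) :
    Continuous fun x => ∫ q, f (T x q) ∂p := by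
  have hcont : ∀ x, Continuous (T x) := fun x => hT.comp (Continuous.prodMk_right x)
  refine continuous_of_dominated (bound := fun _ => ‖f‖)
    (fun x => (f.continuous.comp (hcont x)).aestronglyMeasurable)
    (fun x => .of_forall fun q => f.norm_coe_le_norm _) (integrable_const _)
    (.of_forall fun q => f.continuous.comp (hT.comp (Continuous.prodMk_left q)))

end Symmetrization

theorem symmetrization_fixed_iff_invariant_general
    {Q : Type*} [MetricSpace Q] [MeasurableSpace Q] [BorelSpace Q]
    {G : Type*} [Group G] [TopologicalSpace G] [IsTopologicalGroup G] [CompactSpace G]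
    [TopologicalSpace.MetrizableSpace G]
    (T : G → Q → Q)
    (hTcont : Continuous (fun x : G × Q => T x.1 x.2))
    (hTmul : ∀ g h : G, ∀ q : Q, T g (T h q) = T (g * h) q)
    (hTone : ∀ q : Q, T 1 q = q)
    (p : Measure Q) [IsProbabilityMeasure p]
    (CG : Finset G) (hCG : CG.Nonempty)
    (hgen : closure ((Subgroup.closure (CG : Set G) : Subgroup G) : Set G) = Set.univ) :
    ((CG.card : ℝ≥0∞))⁻¹ • ∑ g ∈ CG, Measure.map (T g) p = p
      ↔ ∀ g : G, Measure.map (T g) p = p := by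
  have hTmeas : ∀ g, Measurable (T g) := fun g =>
    (hTcont.comp (Continuous.prodMk_right g)).measurable
  refine ⟨fun hfixed g => ?_, fun hinv => ?_⟩
  · refine ext_of_forall_integral_eq_of_IsFiniteMeasure fun f => ?_
    have hmean (h : G) : ∫ q, f (T h q) ∂p
        = (CG.card : ℝ)⁻¹ * ∑ g ∈ CG, ∫ q, f (T (h * g) q) ∂p := by
      conv_lhs => rw [← hfixed]
      simpa only [BoundedContinuousFunction.compContinuous_apply, ContinuousMap.coe_mk, hTmul]
        using integral_inv_card_smul_sum_map hTmeas CG p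
          (f.compContinuous ⟨T h, hTcont.comp (Continuous.prodMk_right h)⟩)
    have hconst := (continuous_integral_comp_of_continuous_uncurry hTcont p f
      ).eq_of_forall_eq_inv_card_mul_sum_mul (dense_iff_closure_eq.2 hgen) hmean g 1
    rw [integral_map (hTmeas g).aemeasurable f.continuous.aestronglyMeasurable, hconst]
    simp only [hTone]
  · rw [Finset.sum_congr rfl fun g _ => hinv g, Finset.sum_const, ← Nat.cast_smul_eq_nsmul ℝ≥0∞,
      smul_smul, ENNReal.inv_mul_cancel (Nat.cast_ne_zero.2 hCG.card_pos.ne')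
        (ENNReal.natCast_ne_top _), one_smul]

/-- Lemma 4.3: for a compact metrizable group `G` acting continuously on a metric space `Q` and a
finite nonempty topological generating set `C_G ⊆ G`, a Borel probability measure `p` satisfies
`(1/|C_G|)·∑_{g∈C_G} (T g)_* p = p` if and only if `(T g)_* p = p` for every `g ∈ G`. -/
theorem symmetrization_fixed_iff_invariant
    {Q : Type*} [MetricSpace Q] [MeasurableSpace Q] [BorelSpace Q]
    {G : Type*} [Group G] [TopologicalSpace G] [IsTopologicalGroup G] [CompactSpace G]
    [TopologicalSpace.MetrizableSpace G] [MeasurableSpace G] [BorelSpace G]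
    (T : G → Q → Q)
    (hTcont : Continuous (fun x : G × Q => T x.1 x.2))
    (hTmul : ∀ g h : G, ∀ q : Q, T g (T h q) = T (g * h) q)
    (hTone : ∀ q : Q, T 1 q = q)
    (p : Measure Q) [IsProbabilityMeasure p]
    (CG : Finset G) (hCG : CG.Nonempty)
    (hgen : closure ((Subgroup.closure (CG : Set G) : Subgroup G) : Set G) = Set.univ) :
    ((CG.card : ℝ≥0∞))⁻¹ • ∑ g ∈ CG, Measure.map (T g) p = p
      ↔ ∀ g : G, Measure.map (T g) p = p :=
  symmetrization_fixed_iff_invariant_general T hTcont hTmul hTone p CG hCG hgen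
end
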